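/- Let ts : {1,...,n} → ℝ be monotone and satisfy all constraints of an M weight-bounded linear weighted graph G. Suppose i is a position with ⌊ts(i+1)⌋ - ⌊ts(i)⌋ ≥ M (a large gap). Then no forward edge of G crosses the gap (i.e., there is no edge (u,◁,α,v) ∈ E with u ≤ i < i+1 ≤ v), and for any t > ts(i) + M - 1, the map ts'' defined by ts''(w) = ts(w) for w ≤ i and ts''(w) = t + ts(w) - ts(i+1) for w > i is again a monotone realization of G. -/
import Mathlib


open Finset

/-- A weighted constraint edge: `ts tgt - ts src ◁ wt` where ◁ is `<` if `strict` else `≤`. -/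
structure WEdge where
  src : ℕ
  strict : Bool
  wt : ℤ
  tgt : ℕ
deriving DecidableEq

/-- `ts` satisfies the constraint of edge `e`. -/
def satEdge (ts : ℕ → ℝ) (e : WEdge) : Prop :=
  if e.strict then ts e.tgt - ts e.src < (e.wt : ℝ) else ts e.tgt - ts e.src ≤ (e.wt : ℝ)

/-- `ts` realizes the linear weighted graph on vertices `{1,…,n}` with edge set `E`:
monotone w.r.t. the linear order and all difference constraints hold. -/
def Realizes (n : ℕ) (E : Finset WEdge) (ts : ℕ → ℝ) : Prop :=
  (∀ u v : ℕ, 1 ≤ u → u ≤ v → v ≤ n → ts u ≤ ts v) ∧ ∀ e ∈ E, satEdge ts e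

/-- Integer parts of consecutive time-stamps differ by at least 0 and at most `M - 1`. -/
def SlowlyMonotone (M : ℤ) (n : ℕ) (ts : ℕ → ℝ) : Prop :=
  ∀ i : ℕ, 1 ≤ i → i < n → 0 ≤ ⌊ts (i + 1)⌋ - ⌊ts i⌋ ∧ ⌊ts (i + 1)⌋ - ⌊ts i⌋ ≤ M - 1

/-- All edges of the graph have endpoints in `{1,…,n}`. -/
def InGraph (n : ℕ) (E : Finset WEdge) : Prop :=
  ∀ e ∈ E, 1 ≤ e.src ∧ e.src ≤ n ∧ 1 ≤ e.tgt ∧ e.tgt ≤ n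

/-- `M` weight-bounded: all weights have absolute value at most `M - 1`. -/
def WtBounded (M : ℤ) (E : Finset WEdge) : Prop := ∀ e ∈ E, |e.wt| ≤ M - 1

/-- `dtsm(u,v) = (tsm v - tsm u) mod M`. -/
def dtsm (M : ℤ) (tsm : ℕ → ℤ) (u v : ℕ) : ℤ := (tsm v - tsm u) % M

/-- `dtsm⁺(u,v)`, for `u ≤ v`: the cumulative sum of consecutive `dtsm`'s, capped at `M`. -/
def dtsmP (M : ℤ) (tsm : ℕ → ℤ) (u v : ℕ) : ℤ :=
  min M (∑ i ∈ Finset.Ico u v, dtsm M tsm i (i + 1))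

/-- Antisymmetric extension of `dtsm⁺` to arbitrary pairs. -/
def dtsmE (M : ℤ) (tsm : ℕ → ℤ) (u v : ℕ) : ℤ :=
  if u ≤ v then dtsmP M tsm u v else - dtsmP M tsm v u

/-- `(u,v)` is `tsm`-big. -/
def TsmBig (M : ℤ) (tsm : ℕ → ℤ) (u v : ℕ) : Prop :=
  ∃ w1 w2 : ℕ, u ≤ w1 ∧ w1 < w2 ∧ w2 ≤ v ∧ M ≤ dtsm M tsm u w1 + dtsm M tsm w1 w2

/-- `tsm` is a time-stamping modulo `M` on vertices `{1,…,n}`. -/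
def TSM (M : ℤ) (n : ℕ) (tsm : ℕ → ℤ) : Prop :=
  ∀ v, 1 ≤ v → v ≤ n → 0 ≤ tsm v ∧ tsm v < M

/-- `tsm` weakly satisfies the graph (forward/backward conditions). -/
def WeaklySat (M : ℤ) (E : Finset WEdge) (tsm : ℕ → ℤ) : Prop :=
  ∀ e ∈ E,
    (e.src ≤ e.tgt → ¬ TsmBig M tsm e.src e.tgt ∧ dtsm M tsm e.src e.tgt ≤ e.wt) ∧
    (e.tgt < e.src → TsmBig M tsm e.tgt e.src ∨ - e.wt ≤ dtsm M tsm e.tgt e.src)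

/-- `(u,v) ∈ geqFr`: fractional part of `ts u` must be ≥ that of `ts v`. -/
def geqFr (M : ℤ) (tsm : ℕ → ℤ) (E : Finset WEdge) (u v : ℕ) : Prop :=
  (∃ e ∈ E, e.src = u ∧ e.tgt = v ∧ dtsmE M tsm u v = e.wt) ∨
  (v + 1 = u ∧ dtsmE M tsm u v = 0)

/-- `(u,v) ∈ gtFr`: fractional part of `ts u` must be > that of `ts v`. -/
def gtFr (M : ℤ) (tsm : ℕ → ℤ) (E : Finset WEdge) (u v : ℕ) : Prop :=
  ∃ e ∈ E, e.strict = true ∧ e.src = u ∧ e.tgt = v ∧ dtsmE M tsm u v = e.wt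

open Classical in
/-- Number of `gtFr` edges used by the path `p 0, p 1, …, p k`. -/
noncomputable def gtCount (M : ℤ) (tsm : ℕ → ℤ) (E : Finset WEdge) (k : ℕ) (p : ℕ → ℕ) : ℕ :=
  ((Finset.range k).filter (fun i => gtFr M tsm E (p i) (p (i + 1)))).card

theorem large_gap_can_be_reduced (M : ℤ) (hM : 1 ≤ M) (n : ℕ) (E : Finset WEdge)
    (hG : InGraph n E) (hW : WtBounded M E) (ts : ℕ → ℝ) (h : Realizes n E ts)
    (i : ℕ) (hi1 : 1 ≤ i) (hin : i < n) (hgap : M ≤ ⌊ts (i + 1)⌋ - ⌊ts i⌋) :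
    (¬ ∃ e ∈ E, e.src ≤ i ∧ i + 1 ≤ e.tgt) ∧
    (∀ t : ℝ, ts i + (M : ℝ) - 1 < t →
      Realizes n E (fun w => if w ≤ i then ts w else t + ts w - ts (i + 1))) := by
  obtain ⟨hmono, hsat⟩ := h
  have hts : (M : ℝ) - 1 < ts (i + 1) - ts i := by
    have h1 : (⌊ts (i + 1)⌋ : ℝ) ≤ ts (i + 1) := Int.floor_le _
    have h2 : ts i < ⌊ts i⌋ + 1 := Int.lt_floor_add_one _
    have h3 : (M : ℝ) ≤ (⌊ts (i + 1)⌋ : ℝ) - (⌊ts i⌋ : ℝ) := by exact_mod_cast hgap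
    linarith
  have hM' : (1 : ℝ) ≤ (M : ℝ) := by exact_mod_cast hM
  have noedge : ¬ ∃ e ∈ E, e.src ≤ i ∧ i + 1 ≤ e.tgt := by
    rintro ⟨e, he, h1, h2⟩
    obtain ⟨hs1, hs2, ht1, ht2⟩ := hG e he
    have hA : ts e.src ≤ ts i := hmono _ _ hs1 h1 (le_of_lt hin)
    have hB : ts (i + 1) ≤ ts e.tgt := hmono _ _ (by omega) h2 ht2
    have hw' : (e.wt : ℝ) ≤ (M : ℝ) - 1 := by
      have : e.wt ≤ M - 1 := le_trans (le_abs_self _) (hW e he)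
      exact_mod_cast this
    have hse := hsat e he
    unfold satEdge at hse
    split at hse <;> linarith
  refine ⟨noedge, fun t ht => ?_⟩
  constructor
  · intro u v hu huv hvn
    by_cases h1 : u ≤ i <;> by_cases h2 : v ≤ i <;> simp only [h1, h2, if_true, if_false, if_pos, if_neg, not_false_iff]
    · exact hmono u v hu huv hvn
    · have hA : ts u ≤ ts i := hmono u i hu h1 (le_of_lt hin)
      have hB : ts (i + 1) ≤ ts v := hmono _ _ (by omega) (by omega) hvn
      linarith
    · omega
    · have := hmono u v hu huv hvn; linarith
  · intro e he
    obtain ⟨hs1, hs2, ht1, ht2⟩ := hG e he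
    have hwlo : -((M : ℝ) - 1) ≤ (e.wt : ℝ) := by
      have : -(M - 1) ≤ e.wt := neg_le_of_abs_le (hW e he)
      exact_mod_cast this
    have hse := hsat e he
    unfold satEdge at hse ⊢
    by_cases h1 : e.src ≤ i <;> by_cases h2 : e.tgt ≤ i <;>
      simp only [h1, h2, if_true, if_false]
    · exact hse
    · exact absurd ⟨e, he, h1, by omega⟩ noedge
    · have hA : ts e.tgt ≤ ts i := hmono _ _ ht1 h2 (le_of_lt hin)
      have hB : ts (i + 1) ≤ ts e.src := hmono _ _ (by omega) (by omega) hs2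
      have key : ts e.tgt - (t + ts e.src - ts (i + 1)) < (e.wt : ℝ) := by linarith
      split <;> linarith
    · split at hse <;> split <;> first | linarith | (exfalso; simp_all)
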